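/- Let Vmin ≤ V1, V4 ≤ Vmax, let V be a real number with Vmin ≤ V ≤ Vmax, let Q be a real number, and let M ≥ 2·Qmax + (Vmax − Vmin)·(1 + Qmax/min(V2 − V1, V4 − V3)). Then there exist binaries z1, z2, z3, z4, z5 ∈ {0,1} satisfying the Big-M constraints (21)–(31) if and only if Q = f(V). That is, the mixed-integer linear system (21)–(31) is an exact reformulation of the piecewise-linear Volt-VAr droop characteristic (20). -/

import Mathlib

/-- The IEEE 1547-2018 Volt-VAr droop characteristic (Q–V curve) of a PV smart inverter. -/
noncomputable def voltVarDroop (Qmax V1 V2 V3 V4 : ℝ) (V : ℝ) : ℝ :=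
  if V < V1 then Qmax
  else if V < V2 then Qmax * (V2 - V) / (V2 - V1)
  else if V < V3 then 0
  else if V < V4 then -Qmax * (V - V3) / (V4 - V3)
  else -Qmax

/-- The Big-M constraints (21)–(30) on the voltage `V`, reactive power `Q`, and
binary indicator variables `z1,…,z5` of the five operating zones. -/
def BigMConstraints (Qmax V1 V2 V3 V4 M V Q z1 z2 z3 z4 z5 : ℝ) : Prop :=
  -- (21)
  V ≤ V1 + M * z1 ∧
  -- (22)
  (Qmax - M * z1 ≤ Q ∧ Q ≤ Qmax + M * z1) ∧
  -- (23)
  (V1 - M * z2 ≤ V ∧ V ≤ V2 + M * z2) ∧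
  -- (24)
  (-(M * z2) ≤ Q - Qmax * (V2 - V) / (V2 - V1) ∧
    Q - Qmax * (V2 - V) / (V2 - V1) ≤ M * z2) ∧
  -- (25)
  (V2 - M * z3 ≤ V ∧ V ≤ V3 + M * z3) ∧
  -- (26)
  (-(M * z3) ≤ Q ∧ Q ≤ M * z3) ∧
  -- (27)
  (V3 - M * z4 ≤ V ∧ V ≤ V4 + M * z4) ∧
  -- (28)
  (-(M * z4) ≤ Q + Qmax * (V - V3) / (V4 - V3) ∧
    Q + Qmax * (V - V3) / (V4 - V3) ≤ M * z4) ∧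
  -- (29)
  V4 - M * z5 ≤ V ∧
  -- (30)
  (-(M * z5) ≤ Q + Qmax ∧ Q + Qmax ≤ M * z5)


/-! Constraint (31) forces some indicator to vanish, and a vanishing indicator pins `V` to the
closed zone and `Q` to the affine piece of that zone; the piece agrees with `f` on the whole closed
zone because `f` is continuous. Conversely, put `0` on the zone containing `V` and `1` elsewhere:
the bound on `M` makes every constraint with indicator `1` slack, because `|Q| ≤ Qmax`,
`|V - Vᵢ| ≤ Vmax - Vmin` and each sloped piece is at most
`(Vmax - Vmin) · Qmax / min (V2 - V1) (V4 - V3)` in absolute value on `[Vmin, Vmax]`. -/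

lemma exists_eq_zero_of_sum_lt_card {ι : Type*} (s : Finset ι) {z : ι → ℝ}
    (hz : ∀ i ∈ s, z i = 0 ∨ z i = 1) (hsum : ∑ i ∈ s, z i < s.card) :
    ∃ i ∈ s, z i = 0 := by
  by_contra! h
  have hone : ∀ i ∈ s, z i = 1 := fun i hi => (hz i hi).resolve_left (h i hi)
  simp [Finset.sum_congr rfl hone] at hsum

lemma binary_eq_zero_of_sum_le_four {z1 z2 z3 z4 z5 : ℝ}
    (hz1 : z1 = 0 ∨ z1 = 1) (hz2 : z2 = 0 ∨ z2 = 1) (hz3 : z3 = 0 ∨ z3 = 1)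
    (hz4 : z4 = 0 ∨ z4 = 1) (hz5 : z5 = 0 ∨ z5 = 1) (hsum : z1 + z2 + z3 + z4 + z5 ≤ 4) :
    z1 = 0 ∨ z2 = 0 ∨ z3 = 0 ∨ z4 = 0 ∨ z5 = 0 := by
  obtain ⟨i, -, hi⟩ := exists_eq_zero_of_sum_lt_card Finset.univ (z := ![z1, z2, z3, z4, z5])
    (by simp [Fin.forall_fin_succ, *]) (by simp [Fin.sum_univ_five]; linarith)
  fin_cases i <;> simp_all

lemma abs_mul_div_le_self {c a b : ℝ} (hc : 0 ≤ c) (ha : 0 ≤ a) (hab : a ≤ b) :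
    |c * a / b| ≤ c := by
  rw [abs_of_nonneg (div_nonneg (mul_nonneg hc ha) (ha.trans hab)), mul_div_assoc]
  exact mul_le_of_le_one_right hc (div_le_one_of_le₀ hab (ha.trans hab))

lemma abs_mul_div_le_of_le {c a b m D : ℝ} (hc : 0 ≤ c) (hm : 0 < m) (hmb : m ≤ b)
    (ha : |a| ≤ D) : |c * a / b| ≤ D * (c / m) := by
  rw [abs_div, abs_mul, abs_of_nonneg hc, abs_of_pos (hm.trans_le hmb)]
  have hD : 0 ≤ D := (abs_nonneg a).trans ha
  calc c * |a| / b ≤ c * D / m :=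
        div_le_div₀ (mul_nonneg hc hD) (mul_le_mul_of_nonneg_left ha hc) hm hmb
    _ = D * (c / m) := by ring

section voltVarDroop

variable {Qmax V1 V2 V3 V4 V : ℝ}

lemma abs_voltVarDroop_le (hQmax : 0 ≤ Qmax) : |voltVarDroop Qmax V1 V2 V3 V4 V| ≤ Qmax := by
  unfold voltVarDroop
  split_ifs with h1 h2 h3 h4
  · exact (abs_of_nonneg hQmax).le
  · exact abs_mul_div_le_self hQmax (by linarith) (by linarith)
  · simpa using hQmax
  · rw [neg_mul, neg_div, abs_neg]
    exact abs_mul_div_le_self hQmax (by linarith) (by linarith)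
  · simpa using (abs_of_nonneg hQmax).le

lemma voltVarDroop_eq_of_le_V1 (h12 : V1 < V2) (hV : V ≤ V1) :
    voltVarDroop Qmax V1 V2 V3 V4 V = Qmax := by
  rcases hV.lt_or_eq with hV | rfl
  · simp [voltVarDroop, hV]
  · simp [voltVarDroop, h12, (sub_pos.2 h12).ne']

lemma voltVarDroop_eq_of_mem_Icc_V1_V2 (h23 : V2 < V3) (hV : V ∈ Set.Icc V1 V2) :
    voltVarDroop Qmax V1 V2 V3 V4 V = Qmax * (V2 - V) / (V2 - V1) := by
  obtain ⟨hV1, hV2⟩ := hV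
  rcases hV2.lt_or_eq with hV2 | rfl
  · simp [voltVarDroop, hV1.not_gt, hV2]
  · simp [voltVarDroop, hV1.not_gt, h23]

lemma voltVarDroop_eq_zero_of_mem_Icc_V2_V3 (h12 : V1 < V2) (h34 : V3 < V4)
    (hV : V ∈ Set.Icc V2 V3) : voltVarDroop Qmax V1 V2 V3 V4 V = 0 := by
  obtain ⟨hV2, hV3⟩ := hV
  rcases hV3.lt_or_eq with hV3 | rfl
  · simp [voltVarDroop, (h12.trans_le hV2).not_gt, hV2.not_gt, hV3]
  · simp [voltVarDroop, (h12.trans_le hV2).not_gt, hV2.not_gt, h34]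

lemma voltVarDroop_eq_of_mem_Icc_V3_V4 (h12 : V1 < V2) (h23 : V2 < V3) (h34 : V3 < V4)
    (hV : V ∈ Set.Icc V3 V4) :
    voltVarDroop Qmax V1 V2 V3 V4 V = -(Qmax * (V - V3) / (V4 - V3)) := by
  obtain ⟨hV3, hV4⟩ := hV
  have hV2 : V2 ≤ V := h23.le.trans hV3
  rcases hV4.lt_or_eq with hV4 | rfl
  · simp [voltVarDroop, (h12.trans_le hV2).not_gt, hV2.not_gt, hV3.not_gt, hV4, neg_div]
  · simp [voltVarDroop, (h12.trans_le hV2).not_gt, hV2.not_gt, hV3.not_gt,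
      (sub_pos.2 h34).ne']

lemma voltVarDroop_eq_of_V4_le (h12 : V1 < V2) (h23 : V2 < V3) (h34 : V3 < V4)
    (hV : V4 ≤ V) :
    voltVarDroop Qmax V1 V2 V3 V4 V = -Qmax := by
  have hV3 : V3 ≤ V := h34.le.trans hV
  have hV2 : V2 ≤ V := h23.le.trans hV3
  simp [voltVarDroop, (h12.trans_le hV2).not_gt, hV2.not_gt, hV3.not_gt, hV.not_gt]

end voltVarDroop

lemma eq_voltVarDroop_of_bigMConstraints {Qmax V1 V2 V3 V4 M V Q z1 z2 z3 z4 z5 : ℝ}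
    (h12 : V1 < V2) (h23 : V2 < V3) (h34 : V3 < V4)
    (hz : z1 = 0 ∨ z2 = 0 ∨ z3 = 0 ∨ z4 = 0 ∨ z5 = 0)
    (h : BigMConstraints Qmax V1 V2 V3 V4 M V Q z1 z2 z3 z4 z5) :
    Q = voltVarDroop Qmax V1 V2 V3 V4 V := by
  obtain ⟨c21, ⟨c22, c22'⟩, ⟨c23, c23'⟩, ⟨c24, c24'⟩, ⟨c25, c25'⟩, ⟨c26, c26'⟩, ⟨c27, c27'⟩,
    ⟨c28, c28'⟩, c29, c30, c30'⟩ := h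
  rcases hz with rfl | rfl | rfl | rfl | rfl
  · rw [voltVarDroop_eq_of_le_V1 h12 (by linarith)]; linarith
  · rw [voltVarDroop_eq_of_mem_Icc_V1_V2 h23 ⟨by linarith, by linarith⟩]; linarith
  · rw [voltVarDroop_eq_zero_of_mem_Icc_V2_V3 h12 h34 ⟨by linarith, by linarith⟩]; linarith
  · rw [voltVarDroop_eq_of_mem_Icc_V3_V4 h12 h23 h34 ⟨by linarith, by linarith⟩]; linarith
  · rw [voltVarDroop_eq_of_V4_le h12 h23 h34 (by linarith)]; linarith

lemma exists_bigMConstraints_of_eq_voltVarDroop {Qmax V1 V2 V3 V4 Vmin Vmax M V Q : ℝ}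
    (hQmax : 0 ≤ Qmax) (h12 : V1 < V2) (h23 : V2 < V3) (h34 : V3 < V4)
    (hVmin : Vmin ≤ V1) (hVmax : V4 ≤ Vmax) (hVlo : Vmin ≤ V) (hVhi : V ≤ Vmax)
    (hM : 2 * Qmax + (Vmax - Vmin) * (1 + Qmax / min (V2 - V1) (V4 - V3)) ≤ M)
    (hQ : Q = voltVarDroop Qmax V1 V2 V3 V4 V) :
    ∃ z1 z2 z3 z4 z5 : ℝ,
      (z1 = 0 ∨ z1 = 1) ∧ (z2 = 0 ∨ z2 = 1) ∧ (z3 = 0 ∨ z3 = 1) ∧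
      (z4 = 0 ∨ z4 = 1) ∧ (z5 = 0 ∨ z5 = 1) ∧
      z1 + z2 + z3 + z4 + z5 ≤ 4 ∧
      BigMConstraints Qmax V1 V2 V3 V4 M V Q z1 z2 z3 z4 z5 := by
  set m := min (V2 - V1) (V4 - V3)
  have hm : 0 < m := lt_min (by linarith) (by linarith)
  have hslope : 0 ≤ (Vmax - Vmin) * (Qmax / m) := mul_nonneg (by linarith) (by positivity)
  have hQ_le : |Q| ≤ Qmax := hQ ▸ abs_voltVarDroop_le hQmax
  have hp2 : |Qmax * (V2 - V) / (V2 - V1)| ≤ (Vmax - Vmin) * (Qmax / m) :=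
    abs_mul_div_le_of_le hQmax hm (min_le_left _ _) (abs_le.2 ⟨by linarith, by linarith⟩)
  have hp4 : |Qmax * (V - V3) / (V4 - V3)| ≤ (Vmax - Vmin) * (Qmax / m) :=
    abs_mul_div_le_of_le hQmax hm (min_le_right _ _) (abs_le.2 ⟨by linarith, by linarith⟩)
  rw [mul_one_add] at hM
  rw [abs_le] at hQ_le hp2 hp4
  unfold BigMConstraints
  rcases le_total V V1 with hV1 | hV1
  · rw [voltVarDroop_eq_of_le_V1 h12 hV1] at hQ
    refine ⟨0, 1, 1, 1, 1, ?_⟩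
    norm_num; and_intros <;> linarith
  rcases le_total V V2 with hV2 | hV2
  · rw [voltVarDroop_eq_of_mem_Icc_V1_V2 h23 ⟨hV1, hV2⟩] at hQ
    refine ⟨1, 0, 1, 1, 1, ?_⟩
    norm_num; and_intros <;> linarith
  rcases le_total V V3 with hV3 | hV3
  · rw [voltVarDroop_eq_zero_of_mem_Icc_V2_V3 h12 h34 ⟨hV2, hV3⟩] at hQ
    refine ⟨1, 1, 0, 1, 1, ?_⟩
    norm_num; and_intros <;> linarith
  rcases le_total V V4 with hV4 | hV4
  · rw [voltVarDroop_eq_of_mem_Icc_V3_V4 h12 h23 h34 ⟨hV3, hV4⟩] at hQ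
    refine ⟨1, 1, 1, 0, 1, ?_⟩
    norm_num; and_intros <;> linarith
  · rw [voltVarDroop_eq_of_V4_le h12 h23 h34 hV4] at hQ
    refine ⟨1, 1, 1, 1, 0, ?_⟩
    norm_num; and_intros <;> linarith

/-- the mixed-integer linear system (21)–(31) is an exact reformulation
of the piecewise-linear Volt-VAr droop characteristic (20). -/
theorem bigM_exact_reformulation
    (Qmax V1 V2 V3 V4 Vmin Vmax M V Q : ℝ)
    (hQmax : 0 < Qmax) (h12 : V1 < V2) (h23 : V2 < V3) (h34 : V3 < V4)
    (hVmin : Vmin ≤ V1) (hVmax : V4 ≤ Vmax)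
    (hVlo : Vmin ≤ V) (hVhi : V ≤ Vmax)
    (hM : 2 * Qmax + (Vmax - Vmin) * (1 + Qmax / min (V2 - V1) (V4 - V3)) ≤ M) :
    (∃ z1 z2 z3 z4 z5 : ℝ,
      (z1 = 0 ∨ z1 = 1) ∧ (z2 = 0 ∨ z2 = 1) ∧ (z3 = 0 ∨ z3 = 1) ∧
      (z4 = 0 ∨ z4 = 1) ∧ (z5 = 0 ∨ z5 = 1) ∧
      z1 + z2 + z3 + z4 + z5 ≤ 4 ∧
      BigMConstraints Qmax V1 V2 V3 V4 M V Q z1 z2 z3 z4 z5) ↔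
    Q = voltVarDroop Qmax V1 V2 V3 V4 V := by
  refine ⟨?_,
    exists_bigMConstraints_of_eq_voltVarDroop hQmax.le h12 h23 h34 hVmin hVmax hVlo hVhi hM⟩
  rintro ⟨z1, z2, z3, z4, z5, hz1, hz2, hz3, hz4, hz5, hsum, h⟩
  exact eq_voltVarDroop_of_bigMConstraints h12 h23 h34
    (binary_eq_zero_of_sum_le_four hz1 hz2 hz3 hz4 hz5 hsum) h
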